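/- arXiv:1406.7434 — 2 statements merged into one kernel-verified Lean document; each statement's English description precedes it below -/
import Mathlib

section
/- Let δ > 2 and set t_k(δ) = k^{k(δ-2)} exp(-k^δ/2). Then there exist constants A > 0 and k_0 such that for all integers k ≥ k_0 and all 0 < s ≤ t_k(δ), the Gamma(k,1) upper quantile satisfies H_k^{-1}(1-s) = log(1/s)·(1 + q(s)) with |q(s)| ≤ A (log k)/k^{δ-1}. -/
/-!
Write `L = log (1 / s)` and `x = H_k⁻¹(1 - s)`. Integrating by parts gives
`1 - H_k(x) = e^{-x} ∑_{j<k} x^j / j!`, and bounding the sum below by `1` and above by `x^k`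
traps `x` between `L` and `L + k log x`. The hypothesis `s ≤ t_k(δ)` forces `L ≥ k^δ / 4`, and
then `log x ≤ log (k^δ) + x / k^δ - 1` turns `x - L ≤ k log x` into
`(x - L) / L = O(log k / k^{δ-1})`.
-/

open Real MeasureTheory Filter Set

/-- CDF of the Gamma(k,1) distribution with integer shape `k ≥ 1`. -/
noncomputable def Hgamma (k : ℕ) (x : ℝ) : ℝ :=
  ∫ t in (0:ℝ)..x, t ^ (k - 1) * Real.exp (-t) / (Nat.factorial (k - 1) : ℝ)

/-- `t_k(δ) = k^{k(δ-2)} exp(-k^δ/2)`. -/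
noncomputable def tk (δ : ℝ) (k : ℕ) : ℝ :=
  (k : ℝ) ^ ((k : ℝ) * (δ - 2)) * Real.exp (-(k : ℝ) ^ δ / 2)

open Finset
open scoped Nat

noncomputable def expPartialSum (k : ℕ) (x : ℝ) : ℝ :=
  ∑ j ∈ range k, x ^ j / j !

lemma hasDerivAt_expPartialSum_succ (m : ℕ) (t : ℝ) :
    HasDerivAt (expPartialSum (m + 1)) (expPartialSum m t) t := by
  refine (HasDerivAt.fun_sum fun j _ => (hasDerivAt_pow j t).div_const (j ! : ℝ)).congr_deriv ?_
  rw [sum_range_succ']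
  simp only [expPartialSum, Nat.cast_add, Nat.cast_one, Nat.add_sub_cancel, Nat.factorial_succ,
    Nat.cast_mul, CharP.cast_eq_zero, zero_mul, zero_div, add_zero]
  exact sum_congr rfl fun i _ => mul_div_mul_left _ _ (by positivity)

lemma one_sub_Hgamma (k : ℕ) (hk : 1 ≤ k) (x : ℝ) :
    1 - Hgamma k x = exp (-x) * expPartialSum k x := by
  obtain ⟨m, rfl⟩ := Nat.exists_eq_add_of_le' hk
  have hderiv : ∀ t ∈ uIcc 0 x, HasDerivAt (fun t => -(exp (-t) * expPartialSum (m + 1) t))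
      (t ^ m * exp (-t) / m !) t := by
    intro t _
    refine (((hasDerivAt_neg t).exp.mul (hasDerivAt_expPartialSum_succ m t)).neg).congr_deriv ?_
    simp only [expPartialSum, sum_range_succ]
    ring
  have hint : IntervalIntegrable (fun t : ℝ => t ^ m * exp (-t) / m !) volume 0 x :=
    (by fun_prop : Continuous fun t : ℝ => t ^ m * exp (-t) / m !).intervalIntegrable _ _
  rw [Hgamma, Nat.add_sub_cancel, intervalIntegral.integral_eq_sub_of_hasDerivAt hderiv hint]
  simp [expPartialSum, sum_range_succ']

lemma one_le_expPartialSum {k : ℕ} (hk : 1 ≤ k) {x : ℝ} (hx : 0 ≤ x) :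
    1 ≤ expPartialSum k x := by
  simpa [expPartialSum] using
    single_le_sum (f := fun j => x ^ j / (j ! : ℝ)) (fun j _ => by positivity) (mem_range.2 hk)

lemma expPartialSum_le_pow {k : ℕ} {x : ℝ} (hk : 1 ≤ k) (hx : (k : ℝ) ≤ x) :
    expPartialSum k x ≤ x ^ k := by
  have hx1 : 1 ≤ x := le_trans (by exact_mod_cast hk) hx
  have hterm : ∀ j ∈ range k, x ^ j / (j ! : ℝ) ≤ x ^ (k - 1) := fun j hj =>
    (div_le_self (by positivity) (by exact_mod_cast j.factorial_pos)).trans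
      (pow_le_pow_right₀ hx1 (by have := mem_range.1 hj; omega))
  calc expPartialSum k x ≤ k * x ^ (k - 1) := by
        simpa [expPartialSum] using sum_le_card_nsmul _ _ _ hterm
    _ ≤ x * x ^ (k - 1) := by gcongr
    _ = x ^ k := by rw [← pow_succ', Nat.sub_add_cancel hk]

lemma log_one_div_le_of_tail_eq {k : ℕ} (hk : 1 ≤ k) {x s : ℝ} (hx : 0 ≤ x)
    (hs : exp (-x) * expPartialSum k x = s) : log (1 / s) ≤ x := by
  have hle : exp (-x) ≤ s := by
    rw [← hs]
    exact le_mul_of_one_le_right (exp_pos _).le (one_le_expPartialSum hk hx)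
  have := log_le_log (exp_pos _) hle
  rw [log_exp] at this
  rw [one_div, log_inv]
  linarith

lemma le_log_one_div_add_of_tail_eq {k : ℕ} (hk : 1 ≤ k) {x s : ℝ} (hx : (k : ℝ) ≤ x)
    (hs : exp (-x) * expPartialSum k x = s) : x ≤ log (1 / s) + k * log x := by
  have hx0 : 0 < x := lt_of_lt_of_le (by exact_mod_cast hk) hx
  have hle : s ≤ exp (-x) * x ^ k := by
    rw [← hs]
    exact mul_le_mul_of_nonneg_left (expPartialSum_le_pow hk hx) (exp_pos _).le
  have hs0 : 0 < s := hs ▸ mul_pos (exp_pos _) (by linarith [one_le_expPartialSum hk hx0.le])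
  have := log_le_log hs0 hle
  rw [log_mul (exp_ne_zero _) (by positivity), log_exp, log_pow] at this
  rw [one_div, log_inv]
  linarith

lemma log_tk (δ : ℝ) {k : ℕ} (hk : 0 < k) :
    log (tk δ k) = k * (δ - 2) * log k - (k : ℝ) ^ δ / 2 := by
  rw [tk, log_mul (by positivity) (exp_ne_zero _), log_rpow (by positivity), log_exp]
  ring

lemma le_log_one_div_of_le_tk {δ s : ℝ} {k : ℕ} (hk : 0 < k)
    (hδk : 4 * (δ - 2) * log k ≤ (k : ℝ) ^ (δ - 1)) (hs : 0 < s) (hst : s ≤ tk δ k) :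
    k * (k : ℝ) ^ (δ - 1) / 4 ≤ log (1 / s) := by
  have hk' : (0 : ℝ) < k := by exact_mod_cast hk
  have hpow : (k : ℝ) ^ δ = k * (k : ℝ) ^ (δ - 1) := by
    rw [rpow_sub_one hk'.ne']
    field_simp
  have := log_le_log hs hst
  rw [log_tk δ hk, hpow] at this
  rw [one_div, log_inv]
  nlinarith

lemma abs_div_sub_one_le_of_le_add_mul_log {x L k P : ℝ} (hk : 1 ≤ k) (hP : 2 ≤ P)
    (hkP : k * P ≤ 4 * L) (hLx : L ≤ x) (hxL : x ≤ L + k * log x) :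
    |x / L - 1| ≤ 2 * (1 + 4 * log (k * P)) / P := by
  have hkP0 : 1 ≤ k * P := by nlinarith
  have hL : 0 < L := by linarith
  have hP0 : 0 < P := by linarith
  have hk0 : 0 < k := by linarith
  have hx0 : 0 < x := by linarith
  have hlog : log x ≤ log (k * P) + x / (k * P) - 1 := by
    have := log_le_sub_one_of_pos (show 0 < x / (k * P) by positivity)
    rw [log_div (by positivity) (by positivity)] at this
    linarith
  have hklog : k * log x ≤ k * log (k * P) + x / P - k := by
    have := mul_le_mul_of_nonneg_left hlog (by linarith : 0 ≤ k)
    rw [mul_sub, mul_add, mul_one, show k * (x / (k * P)) = x / P by field_simp] at this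
    linarith
  have hgap : (x - L) * (P - 1) ≤ L * (1 + 4 * log (k * P)) := by
    have hscaled : (x - L) * P ≤ k * P * log (k * P) + x - k * P := by
      have := mul_le_mul_of_nonneg_right (show x - L ≤ k * log (k * P) + x / P - k by linarith)
        hP0.le
      rw [show (k * log (k * P) + x / P - k) * P = k * P * log (k * P) + x - k * P by
        field_simp] at this
      exact this
    nlinarith [mul_le_mul_of_nonneg_right hkP (log_nonneg hkP0)]
  rw [abs_of_nonneg (by rw [sub_nonneg, one_le_div hL]; exact hLx),
    show x / L - 1 = (x - L) / L by field_simp, div_le_div_iff₀ hL hP0]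
  nlinarith

lemma eventually_mul_log_le_rpow {c r : ℝ} (hc : 0 < c) (hr : 0 < r) :
    ∀ᶠ k : ℕ in atTop, c * log k ≤ (k : ℝ) ^ r := by
  filter_upwards [((isLittleO_log_rpow_atTop hr).natCast_atTop.bound (inv_pos.2 hc)),
    eventually_ge_atTop 1] with k hk hk1
  rw [norm_of_nonneg (log_natCast_nonneg k), norm_of_nonneg (by positivity)] at hk
  rw [← le_div_iff₀' hc]
  simpa [div_eq_inv_mul] using hk

theorem stmt8 (δ : ℝ) (hδ : 2 < δ) (Hinv : ℕ → ℝ → ℝ)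
    (hinv : ∀ k : ℕ, 1 ≤ k → ∀ s ∈ Set.Ioo (0:ℝ) 1,
      Hgamma k (Hinv k s) = s ∧ 0 < Hinv k s) :
    ∃ A > (0:ℝ), ∃ k₀ : ℕ, ∀ k : ℕ, k₀ ≤ k → ∀ s : ℝ, 0 < s → s ≤ tk δ k →
      ∃ q : ℝ, Hinv k (1 - s) = Real.log (1 / s) * (1 + q) ∧
        |q| ≤ A * Real.log k / (k : ℝ) ^ (δ - 1) := by
  obtain ⟨k₀, hk₀⟩ := eventually_atTop.1 <|
    (eventually_mul_log_le_rpow (c := 4 * (δ - 2)) (r := δ - 1) (by linarith) (by linarith)).and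
      (eventually_ge_atTop 4)
  refine ⟨8 * δ + 2, by linarith, k₀, fun k hk s hs hst => ?_⟩
  obtain ⟨hδk, hk4⟩ := hk₀ k hk
  have hk4' : (4 : ℝ) ≤ k := by exact_mod_cast hk4
  have hP : (k : ℝ) ≤ (k : ℝ) ^ (δ - 1) := by
    simpa using rpow_le_rpow_of_exponent_le (by linarith) (by linarith : (1 : ℝ) ≤ δ - 1)
  have hL := le_log_one_div_of_le_tk (by omega) hδk hs hst
  have hL0 : 0 < log (1 / s) := by nlinarith
  have hs1 : s < 1 := by rwa [one_div, log_inv, neg_pos, log_neg_iff hs] at hL0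
  obtain ⟨hHx, hx⟩ := hinv k (by omega) (1 - s) ⟨by linarith, by linarith⟩
  have htail : exp (-Hinv k (1 - s)) * expPartialSum k (Hinv k (1 - s)) = s := by
    rw [← one_sub_Hgamma k (by omega), hHx]; ring
  have hLx := log_one_div_le_of_tail_eq (by omega) hx.le htail
  have hxL := le_log_one_div_add_of_tail_eq (by omega) (by nlinarith) htail
  have hlogk : 1 ≤ log k := by
    rw [le_log_iff_exp_le (by positivity)]
    linarith [exp_one_lt_d9]
  have hkP : log (k * (k : ℝ) ^ (δ - 1)) = δ * log k := by
    rw [rpow_sub_one (by positivity), mul_div_cancel₀ _ (by positivity), log_rpow (by positivity)]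
  refine ⟨Hinv k (1 - s) / log (1 / s) - 1, by field_simp; ring, ?_⟩
  refine (abs_div_sub_one_le_of_le_add_mul_log (k := k) (P := (k : ℝ) ^ (δ - 1)) (by linarith)
    (by linarith) (by linarith) hLx hxL).trans ?_
  rw [hkP]
  gcongr ?_ / _
  nlinarith
end

section
/- Fix an integer k ≥ 1 and define φ(s) = H_k'(H_k^{-1}(s)) · H_k^{-1}(s) for 0 < s < 1, where H_k' is the Gamma(k,1) density. Then for each 0 < h < 1, the function s ↦ φ(s+h) − φ(s) on (0, 1−h) has derivative H_k^{-1}(s) − H_k^{-1}(s+h) < 0, hence is strictly decreasing, and consequently sup_{0 ≤ s ≤ 1-h} |φ(s+h) − φ(s)| = max{ |φ(h) − φ(0+)|, |φ(1−) − φ(1−h)| }. -/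
/-!
Differentiating `H_k (H_k⁻¹ s) = s` gives `(H_k⁻¹)' = 1 / H_k' ∘ H_k⁻¹`, and
`(x H_k'(x))' = H_k'(x) (k - x)`, so `φ' = k - H_k⁻¹`. Hence `s ↦ φ (s + h) - φ s` has derivative
`H_k⁻¹ s - H_k⁻¹ (s + h) < 0`. As `x H_k'(x)` vanishes at `0` and at `∞`, `φ` extends continuously
to `[0, 1]`, so the difference is strictly decreasing on `[0, 1 - h]` and its absolute value is
largest at an endpoint.
-/

open Real MeasureTheory Filter Set

/-- Density of the Gamma(k,1) distribution. -/
noncomputable def Hpdf (k : ℕ) (x : ℝ) : ℝ :=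
  x ^ (k - 1) * Real.exp (-x) / (Nat.factorial (k - 1) : ℝ)

open Topology

theorem AntitoneOn.sSup_abs_image_Icc {α : Type*} [Preorder α] {f : α → ℝ} {a b : α}
    (hf : AntitoneOn f (Icc a b)) (hab : a ≤ b) :
    sSup ((fun x => |f x|) '' Icc a b) = max |f a| |f b| := by
  refine IsGreatest.csSup_eq ⟨?_, ?_⟩
  · rcases max_choice |f a| |f b| with h | h <;> rw [h]
    exacts [mem_image_of_mem _ (left_mem_Icc.2 hab), mem_image_of_mem _ (right_mem_Icc.2 hab)]
  · rintro _ ⟨x, hx, rfl⟩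
    rw [max_comm]
    exact abs_le_max_abs_abs (hf hx (right_mem_Icc.2 hab) hx.2)
      (hf (left_mem_Icc.2 hab) hx hx.1)

theorem Set.RightInvOn.strictMonoOn {α β : Type*} [LinearOrder α] [Preorder β] {F : α → β}
    {G : β → α} {s : Set α} {t : Set β} (hFG : RightInvOn G F t) (hG : MapsTo G t s)
    (hF : StrictMonoOn F s) : StrictMonoOn G t := by
  intro a ha b hb hab
  rwa [← hF.lt_iff_lt (hG ha) (hG hb), hFG ha, hFG hb]

section RightInverse

variable {F G : ℝ → ℝ}

theorem continuousAt_of_rightInvOn_Ioo (hF : StrictMonoOn F (Ioi 0))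
    (hFmaps : MapsTo F (Ioi 0) (Ioo 0 1)) (hFG : RightInvOn G F (Ioo 0 1))
    (hG : MapsTo G (Ioo 0 1) (Ioi 0)) {s : ℝ} (hs : s ∈ Ioo 0 1) : ContinuousAt G s := by
  have hGF : LeftInvOn G F (Ioi 0) := hF.injOn.rightInvOn_of_leftInvOn hFG hFmaps hG
  have himage : Ioi 0 ⊆ G '' Ioo 0 1 := by
    intro x hx
    exact ⟨F x, hFmaps hx, hGF hx⟩
  exact (hFG.strictMonoOn hG hF).continuousAt_of_image_mem_nhds (isOpen_Ioo.mem_nhds hs)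
    (mem_of_superset (isOpen_Ioi.mem_nhds (hG hs)) himage)

theorem tendsto_nhdsGT_zero_of_rightInvOn (hF : StrictMonoOn F (Ioi 0))
    (hFmaps : MapsTo F (Ioi 0) (Ioo 0 1)) (hFG : RightInvOn G F (Ioo 0 1))
    (hG : MapsTo G (Ioo 0 1) (Ioi 0)) : Tendsto G (𝓝[>] 0) (𝓝 0) := by
  have hGF : LeftInvOn G F (Ioi 0) := hF.injOn.rightInvOn_of_leftInvOn hFG hFmaps hG
  refine tendsto_order.2 ⟨fun a ha => ?_, fun ε hε => ?_⟩
  · filter_upwards [Ioo_mem_nhdsGT one_pos] with t ht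
    exact ha.trans (hG ht)
  · have hFε : F ε ∈ Ioo 0 1 := hFmaps hε
    filter_upwards [Ioo_mem_nhdsGT hFε.1] with t ht
    rw [← hGF hε]
    exact hFG.strictMonoOn hG hF ⟨ht.1, ht.2.trans hFε.2⟩ hFε ht.2

theorem tendsto_nhdsLT_one_of_rightInvOn (hF : StrictMonoOn F (Ioi 0))
    (hFmaps : MapsTo F (Ioi 0) (Ioo 0 1)) (hFG : RightInvOn G F (Ioo 0 1))
    (hG : MapsTo G (Ioo 0 1) (Ioi 0)) : Tendsto G (𝓝[<] 1) atTop := by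
  have hGF : LeftInvOn G F (Ioi 0) := hF.injOn.rightInvOn_of_leftInvOn hFG hFmaps hG
  refine tendsto_atTop.2 fun M => ?_
  have hM : (0 : ℝ) < max M 1 := lt_max_of_lt_right one_pos
  have hFM : F (max M 1) ∈ Ioo 0 1 := hFmaps hM
  filter_upwards [Ioo_mem_nhdsLT hFM.2] with t ht
  calc M ≤ max M 1 := le_max_left M 1
    _ = G (F (max M 1)) := (hGF hM).symm
    _ ≤ G t := (hFG.strictMonoOn hG hF hFM ⟨hFM.1.trans ht.1, ht.2⟩ ht.1).le

end RightInverse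

theorem continuous_Hpdf (k : ℕ) : Continuous (Hpdf k) := by
  unfold Hpdf
  fun_prop

theorem Hpdf_pos (k : ℕ) {x : ℝ} (hx : 0 < x) : 0 < Hpdf k x := by
  unfold Hpdf
  positivity

theorem Hpdf_eq_GammaIntegrand (k : ℕ) :
    Hpdf k = fun x => rexp (-x) * x ^ (((k - 1 : ℕ) + 1 : ℝ) - 1) / (k - 1).factorial := by
  funext x
  rw [Hpdf, add_sub_cancel_right, rpow_natCast, mul_comm]

theorem integrableOn_Hpdf_Ioi (k : ℕ) : IntegrableOn (Hpdf k) (Ioi 0) := by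
  rw [Hpdf_eq_GammaIntegrand]
  exact (GammaIntegral_convergent (by positivity)).div_const _

theorem integral_Hpdf_Ioi (k : ℕ) : ∫ x in Ioi 0, Hpdf k x = 1 := by
  rw [Hpdf_eq_GammaIntegrand, integral_div, ← Gamma_eq_integral (by positivity),
    Gamma_nat_eq_factorial, div_self (by positivity)]

theorem hasDerivAt_Hgamma (k : ℕ) (x : ℝ) : HasDerivAt (Hgamma k) (Hpdf k x) x :=
  ((continuous_Hpdf k).integral_hasStrictDerivAt 0 x).hasDerivAt

theorem strictMonoOn_Hgamma (k : ℕ) : StrictMonoOn (Hgamma k) (Ici 0) := by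
  refine strictMonoOn_of_deriv_pos (convex_Ici 0)
    (fun x _ => (hasDerivAt_Hgamma k x).continuousAt.continuousWithinAt) fun x hx => ?_
  rw [interior_Ici] at hx
  rw [(hasDerivAt_Hgamma k x).deriv]
  exact Hpdf_pos k hx

theorem Hgamma_zero (k : ℕ) : Hgamma k 0 = 0 :=
  intervalIntegral.integral_same

theorem Hgamma_le_one (k : ℕ) {x : ℝ} (hx : 0 ≤ x) : Hgamma k x ≤ 1 := by
  rw [← integral_Hpdf_Ioi k, Hgamma, intervalIntegral.integral_of_le hx]
  refine setIntegral_mono_set (integrableOn_Hpdf_Ioi k) ?_ Ioc_subset_Ioi_self.eventuallyLE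
  exact (ae_restrict_iff' measurableSet_Ioi).2 (.of_forall fun t ht => (Hpdf_pos k ht).le)

theorem mapsTo_Hgamma (k : ℕ) : MapsTo (Hgamma k) (Ioi 0) (Ioo 0 1) := by
  intro x hx
  have hx' : (0 : ℝ) ≤ x := hx.le
  constructor
  · simpa only [Hgamma_zero] using strictMonoOn_Hgamma k (mem_Ici.2 le_rfl) hx' hx
  · calc Hgamma k x < Hgamma k (x + 1) :=
          strictMonoOn_Hgamma k hx' (mem_Ici.2 (by linarith)) (lt_add_one x)
      _ ≤ 1 := Hgamma_le_one k (by linarith)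

theorem hasDerivAt_Hpdf_mul_self (k : ℕ) (x : ℝ) :
    HasDerivAt (fun x => Hpdf k x * x) (Hpdf k x * ((k - 1 : ℕ) + 1 - x)) x := by
  have hpow : HasDerivAt (fun y => y ^ (k - 1 + 1) * rexp (-y))
      ((k - 1 + 1 : ℕ) * x ^ (k - 1) * rexp (-x) + x ^ (k - 1 + 1) * (rexp (-x) * -1)) x :=
    (hasDerivAt_pow (k - 1 + 1) x).mul (hasDerivAt_neg x).exp
  have hfun : (fun x => Hpdf k x * x) =
      fun y => y ^ (k - 1 + 1) * rexp (-y) / (k - 1).factorial := by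
    funext y
    simp only [Hpdf, pow_succ]
    ring
  rw [hfun]
  refine (hpow.div_const _).congr_deriv ?_
  simp only [Hpdf, Nat.cast_add, Nat.cast_one, pow_succ]
  ring

theorem tendsto_Hpdf_mul_self_atTop (k : ℕ) : Tendsto (fun x => Hpdf k x * x) atTop (𝓝 0) := by
  have h := (tendsto_pow_mul_exp_neg_atTop_nhds_zero (k - 1 + 1)).div_const
    ((k - 1).factorial : ℝ)
  rw [zero_div] at h
  convert h using 2 with x
  simp only [Hpdf, pow_succ]
  ring

section Quantile

variable {k : ℕ} {G : ℝ → ℝ}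

theorem hasDerivAt_Hpdf_comp_mul_self (hFG : RightInvOn G (Hgamma k) (Ioo 0 1))
    (hG : MapsTo G (Ioo 0 1) (Ioi 0)) {s : ℝ} (hs : s ∈ Ioo 0 1) :
    HasDerivAt (fun u => Hpdf k (G u) * G u) ((k - 1 : ℕ) + 1 - G s) s := by
  have hGcont : ContinuousAt G s := continuousAt_of_rightInvOn_Ioo
    ((strictMonoOn_Hgamma k).mono Ioi_subset_Ici_self) (mapsTo_Hgamma k) hFG hG hs
  have hGderiv : HasDerivAt G (Hpdf k (G s))⁻¹ s :=
    HasDerivAt.of_local_left_inverse hGcont (hasDerivAt_Hgamma k (G s))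
      (Hpdf_pos k (hG hs)).ne' (eventually_of_mem (isOpen_Ioo.mem_nhds hs) hFG)
  refine ((hasDerivAt_Hpdf_mul_self k (G s)).comp s hGderiv).congr_deriv ?_
  field_simp [(Hpdf_pos k (hG hs)).ne']

theorem continuousOn_Hpdf_comp_mul_self (hFG : RightInvOn G (Hgamma k) (Ioo 0 1))
    (hG : MapsTo G (Ioo 0 1) (Ioi 0)) (hG0 : G 0 = 0) (hG1 : Hpdf k (G 1) * G 1 = 0) :
    ContinuousOn (fun u => Hpdf k (G u) * G u) (Icc 0 1) := by
  have hF := (strictMonoOn_Hgamma k).mono Ioi_subset_Ici_self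
  intro s hs
  rcases eq_endpoints_or_mem_Ioo_of_mem_Icc hs with rfl | rfl | hs
  · have hlim : Tendsto (fun x => Hpdf k x * x) (𝓝 0) (𝓝 0) := by
      simpa only [mul_zero] using (hasDerivAt_Hpdf_mul_self k 0).continuousAt.tendsto
    refine (continuousWithinAt_Ioi_iff_Ici.1 ?_).mono Icc_subset_Ici_self
    show Tendsto _ _ (𝓝 (Hpdf k (G 0) * G 0))
    rw [hG0, mul_zero]
    exact hlim.comp (tendsto_nhdsGT_zero_of_rightInvOn hF (mapsTo_Hgamma k) hFG hG)
  · refine (continuousWithinAt_Iio_iff_Iic.1 ?_).mono Icc_subset_Iic_self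
    show Tendsto _ _ (𝓝 (Hpdf k (G 1) * G 1))
    rw [hG1]
    exact (tendsto_Hpdf_mul_self_atTop k).comp
      (tendsto_nhdsLT_one_of_rightInvOn hF (mapsTo_Hgamma k) hFG hG)
  · exact (hasDerivAt_Hpdf_comp_mul_self hFG hG hs).continuousAt.continuousWithinAt

theorem hasDerivAt_Hpdf_comp_mul_self_sub (hFG : RightInvOn G (Hgamma k) (Ioo 0 1))
    (hG : MapsTo G (Ioo 0 1) (Ioi 0)) {h s : ℝ} (hh : 0 ≤ h) (hs : s ∈ Ioo 0 (1 - h)) :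
    HasDerivAt (fun u => Hpdf k (G (u + h)) * G (u + h) - Hpdf k (G u) * G u)
      (G s - G (s + h)) s := by
  have hs0 : s ∈ Ioo 0 1 := ⟨hs.1, by linarith [hs.2]⟩
  have hsh : s + h ∈ Ioo 0 1 := ⟨by linarith [hs.1], by linarith [hs.2]⟩
  have hshift := (hasDerivAt_Hpdf_comp_mul_self hFG hG hsh).comp_add_const s h
  exact (hshift.sub (hasDerivAt_Hpdf_comp_mul_self hFG hG hs0)).congr_deriv (by ring)

theorem lt_add_of_rightInvOn_Hgamma (hFG : RightInvOn G (Hgamma k) (Ioo 0 1))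
    (hG : MapsTo G (Ioo 0 1) (Ioi 0)) {h s : ℝ} (hh : 0 < h) (hs : s ∈ Ioo 0 (1 - h)) :
    G s < G (s + h) :=
  hFG.strictMonoOn hG ((strictMonoOn_Hgamma k).mono Ioi_subset_Ici_self)
    ⟨hs.1, by linarith [hs.2]⟩ ⟨by linarith [hs.1], by linarith [hs.2]⟩ (lt_add_of_pos_right s hh)

theorem strictAntiOn_Hpdf_comp_mul_self_sub (hFG : RightInvOn G (Hgamma k) (Ioo 0 1))
    (hG : MapsTo G (Ioo 0 1) (Ioi 0)) (hG0 : G 0 = 0) (hG1 : Hpdf k (G 1) * G 1 = 0)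
    {h : ℝ} (hh : 0 < h) :
    StrictAntiOn (fun u => Hpdf k (G (u + h)) * G (u + h) - Hpdf k (G u) * G u)
      (Icc 0 (1 - h)) := by
  have hφ := continuousOn_Hpdf_comp_mul_self hFG hG hG0 hG1
  have hcont : ContinuousOn (fun u => Hpdf k (G (u + h)) * G (u + h) - Hpdf k (G u) * G u)
      (Icc 0 (1 - h)) :=
    (hφ.comp (continuous_add_const h).continuousOn fun u hu =>
      ⟨by linarith [hu.1], by linarith [hu.2]⟩).sub (hφ.mono (Icc_subset_Icc_right (by linarith)))
  refine strictAntiOn_of_deriv_neg (convex_Icc 0 (1 - h)) hcont fun s hs => ?_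
  rw [interior_Icc] at hs
  rw [(hasDerivAt_Hpdf_comp_mul_self_sub hFG hG hh.le hs).deriv, sub_neg]
  exact lt_add_of_rightInvOn_Hgamma hFG hG hh hs

end Quantile

theorem stmt12_general (k : ℕ) (Hinv : ℝ → ℝ)
    (hinv : ∀ s ∈ Set.Ioo (0:ℝ) 1, Hgamma k (Hinv s) = s ∧ 0 < Hinv s)
    (hinv0 : Hinv 0 = 0) (hext1 : Hpdf k (Hinv 1) * Hinv 1 = 0)
    (h : ℝ) (hh0 : 0 < h) (hh1 : h < 1) :
    (∀ s ∈ Set.Ioo (0:ℝ) (1 - h),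
        HasDerivAt
          (fun u => Hpdf k (Hinv (u + h)) * Hinv (u + h) - Hpdf k (Hinv u) * Hinv u)
          (Hinv s - Hinv (s + h)) s ∧ Hinv s - Hinv (s + h) < 0) ∧
    StrictAntiOn
      (fun s => Hpdf k (Hinv (s + h)) * Hinv (s + h) - Hpdf k (Hinv s) * Hinv s)
      (Set.Ioo 0 (1 - h)) ∧
    sSup ((fun s => |Hpdf k (Hinv (s + h)) * Hinv (s + h) - Hpdf k (Hinv s) * Hinv s|) ''
        Set.Icc 0 (1 - h))
      = max |Hpdf k (Hinv h) * Hinv h - Hpdf k (Hinv 0) * Hinv 0|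
          |Hpdf k (Hinv 1) * Hinv 1 - Hpdf k (Hinv (1 - h)) * Hinv (1 - h)| := by
  have hFG : RightInvOn Hinv (Hgamma k) (Ioo 0 1) := fun s hs => (hinv s hs).1
  have hG : MapsTo Hinv (Ioo 0 1) (Ioi 0) := fun s hs => (hinv s hs).2
  have hanti := strictAntiOn_Hpdf_comp_mul_self_sub hFG hG hinv0 hext1 hh0
  refine ⟨fun s hs => ⟨hasDerivAt_Hpdf_comp_mul_self_sub hFG hG hh0.le hs,
    sub_neg.2 (lt_add_of_rightInvOn_Hgamma hFG hG hh0 hs)⟩, hanti.mono Ioo_subset_Icc_self, ?_⟩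
  simpa only [zero_add, sub_add_cancel] using
    hanti.antitoneOn.sSup_abs_image_Icc (sub_nonneg.2 hh1.le)

theorem stmt12 (k : ℕ) (hk : 1 ≤ k) (Hinv : ℝ → ℝ)
    (hinv : ∀ s ∈ Set.Ioo (0:ℝ) 1, Hgamma k (Hinv s) = s ∧ 0 < Hinv s)
    (hinv0 : Hinv 0 = 0) (hext1 : Hpdf k (Hinv 1) * Hinv 1 = 0)
    (h : ℝ) (hh0 : 0 < h) (hh1 : h < 1) :
    (∀ s ∈ Set.Ioo (0:ℝ) (1 - h),
        HasDerivAt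
          (fun u => Hpdf k (Hinv (u + h)) * Hinv (u + h) - Hpdf k (Hinv u) * Hinv u)
          (Hinv s - Hinv (s + h)) s ∧ Hinv s - Hinv (s + h) < 0) ∧
    StrictAntiOn
      (fun s => Hpdf k (Hinv (s + h)) * Hinv (s + h) - Hpdf k (Hinv s) * Hinv s)
      (Set.Ioo 0 (1 - h)) ∧
    sSup ((fun s => |Hpdf k (Hinv (s + h)) * Hinv (s + h) - Hpdf k (Hinv s) * Hinv s|) ''
        Set.Icc 0 (1 - h))
      = max |Hpdf k (Hinv h) * Hinv h - Hpdf k (Hinv 0) * Hinv 0|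
          |Hpdf k (Hinv 1) * Hinv 1 - Hpdf k (Hinv (1 - h)) * Hinv (1 - h)| :=
  stmt12_general k Hinv hinv hinv0 hext1 h hh0 hh1
end
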